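/- Let A = ⟨a_α : α < ω₁⟩ be a proper coherent sequence of subsets of ℕ with the ScP. If S ⊆ ω₁ is a cover, then there is a finite F ⊆ ω₁ such that for every α ∈ ω₁ ∖ â_F, the set {γ ∈ S : α ∈ â_γ} is uncountable. -/

import Mathlib

open Set

noncomputable section

/-- The least uncountable ordinal `ω₁`. -/
def omega1 : Ordinal := (Cardinal.aleph 1).ord

/-- `⋃_{γ ∈ F} a_γ` for a finite set `F` of indices. -/
def unionFin (a : Ordinal → Set ℕ) (F : Finset Ordinal) : Set ℕ :=
  ⋃ γ ∈ F, a γ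

/-- A sequence of subsets of `ℕ`, with indices from a (downward closed) domain `D`
of ordinals, is coherent if for all `α ≤ β` in the domain there is a finite `F ⊆ α`
with `a α ∩ a β ⊆ ⋃_{γ∈F} a γ` or `a α ⊆ a β ∪ ⋃_{γ∈F} a γ`. -/
def CoherentOn (D : Set Ordinal) (a : Ordinal → Set ℕ) : Prop :=
  ∀ α β : Ordinal, α ≤ β → β ∈ D →
    ∃ F : Finset Ordinal, (∀ γ ∈ F, γ < α) ∧
      (a α ∩ a β ⊆ unionFin a F ∨ a α ⊆ a β ∪ unionFin a F)

/-- Properness: no `a β` is contained in a finite union of earlier terms. -/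
def ProperOn (D : Set Ordinal) (a : Ordinal → Set ℕ) : Prop :=
  ∀ β ∈ D, ∀ F : Finset Ordinal, (∀ γ ∈ F, γ < β) → ¬ a β ⊆ unionFin a F

/-- `â_β = { α ≤ β : a α ∖ a β ⊆ ⋃_{γ∈F} a γ for some finite F ⊆ α }`. -/
def hatA (a : Ordinal → Set ℕ) (β : Ordinal) : Set Ordinal :=
  { α | α ≤ β ∧ ∃ F : Finset Ordinal, (∀ γ ∈ F, γ < α) ∧ a α \ a β ⊆ unionFin a F }

/-- The topology `τ(A)` on `λ + 1 = {α : α ≤ λ}` generated by the subbase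
consisting of the sets `â_β` and their complements, `β < λ`. -/
def tau (lam : Ordinal) (a : Ordinal → Set ℕ) :
    TopologicalSpace {α : Ordinal // α ≤ lam} :=
  TopologicalSpace.generateFrom
    { s | ∃ β < lam, s = {x : {α : Ordinal // α ≤ lam} | x.1 ∈ hatA a β} ∨
                     s = {x : {α : Ordinal // α ≤ lam} | x.1 ∈ hatA a β}ᶜ }

/-- The subspace `ω₁ = {α : α < ω₁}` of `(ω₁+1, τ(A))`. -/
def tauSub (a : Ordinal → Set ℕ) : TopologicalSpace {y : Ordinal // y < omega1} :=
  TopologicalSpace.induced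
    (fun y : {y : Ordinal // y < omega1} => (⟨y.1, y.2.le⟩ : {α : Ordinal // α ≤ omega1}))
    (tau omega1 a)

/-- Closed unbounded subsets of `ω₁`. -/
def IsClubOmega1 (C : Set Ordinal) : Prop :=
  C ⊆ Iio omega1 ∧
  (∀ α < omega1, ∃ β ∈ C, α ≤ β) ∧
  (∀ δ, δ < omega1 → δ ≠ 0 → (∀ α < δ, ∃ β ∈ C, α < β ∧ β < δ) → δ ∈ C)

/-- Stationary subsets of `ω₁`: sets meeting every club. -/
def IsStationaryOmega1 (S : Set Ordinal) : Prop :=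
  ∀ C : Set Ordinal, IsClubOmega1 C → (S ∩ C).Nonempty

/-- The stationary covering property for a coherent sequence whose index domain is `D`:
if the sequence has length `ω₁` (i.e. `Iio ω₁ ⊆ D`), then every stationary `S ⊆ ω₁`
together with some finite `F` covers, i.e. `⋃_{γ ∈ S ∪ F} â_γ = ω₁`.  (Sequences of
length `< ω₁` have the ScP by convention.) -/
def HasScP (D : Set Ordinal) (a : Ordinal → Set ℕ) : Prop :=
  Iio omega1 ⊆ D →
    ∀ S : Set Ordinal, S ⊆ Iio omega1 → IsStationaryOmega1 S →
      ∃ F : Finset Ordinal, (⋃ γ ∈ S ∪ (↑F : Set Ordinal), hatA a γ) = Iio omega1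

/-- A node of the tree `2^{≤ω₁}`: a function `val` defined on the ordinals `< len`
(with the canonical value `false` beyond `len`). -/
structure Node where
  len : Ordinal
  val : Ordinal → Bool
  canon : ∀ α, len ≤ α → val α = false

open Classical in
/-- The restriction `x ↾ β`. -/
def Node.restrict (x : Node) (β : Ordinal) : Node where
  len := β
  val := fun α => if α < β then x.val α else false
  canon := fun α h => if_neg (not_lt.2 h)

/-- `τ.Extends σ` means `σ ⊆ τ`, i.e. `τ` extends `σ`. -/
def Node.Extends (τ σ : Node) : Prop :=
  σ.len ≤ τ.len ∧ ∀ α < σ.len, τ.val α = σ.val α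

/-- Successor ordinals. -/
def IsSucc (o : Ordinal) : Prop := ∃ β, o = β + 1

open Classical in
/-- `σ†`: if `σ` has successor length `β+1`, the node agreeing with `σ` except at `β`;
otherwise `σ` itself. -/
def Node.dagger (σ : Node) : Node :=
  if h : IsSucc σ.len then
    { len := σ.len
      val := fun α => if α = Classical.choose h then !(σ.val α) else σ.val α
      canon := by
        intro α hα
        have hs := Classical.choose_spec h
        have hne : α ≠ Classical.choose h := by
          intro he
          rw [hs, he] at hα
          rw [Ordinal.add_one_eq_succ] at hα
          exact absurd hα (not_le.2 (Order.lt_succ (Classical.choose h)))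
        show (if α = Classical.choose h then !(σ.val α) else σ.val α) = false
        rw [if_neg hne]
        exact σ.canon α hα }
  else σ

open Classical in
/-- `σ ⌢ b` : the node `σ` extended by one value `b`. -/
def Node.snoc (σ : Node) (b : Bool) : Node where
  len := σ.len + 1
  val := fun α => if α = σ.len then b else σ.val α
  canon := by
    intro α hα
    have h1 : σ.len < α := by
      have h2 : σ.len < σ.len + 1 := by
        rw [Ordinal.add_one_eq_succ]; exact Order.lt_succ σ.len
      exact lt_of_lt_of_le h2 hα
    show (if α = σ.len then b else σ.val α) = false
    rw [if_neg h1.ne']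
    exact σ.canon α h1.le

open Classical in
/-- `x ⌢ σ` : concatenation of nodes. -/
def Node.append (x σ : Node) : Node where
  len := x.len + σ.len
  val := fun α => if α < x.len then x.val α else σ.val (α - x.len)
  canon := by
    intro α hα
    have h1 : ¬ α < x.len := not_lt.2 (le_trans (le_self_add : x.len ≤ x.len + σ.len) hα)
    show (if α < x.len then x.val α else σ.val (α - x.len)) = false
    rw [if_neg h1]
    apply σ.canon
    by_contra h2
    rw [not_le] at h2
    have h3 : α ≤ x.len + (α - x.len) := Ordinal.le_add_sub α x.len
    have h4 : x.len + (α - x.len) < x.len + σ.len := by gcongr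
    exact absurd hα (not_le.2 (lt_of_le_of_lt h3 h4))

/-- A subtree of `2^{<ω₁}` that is downward closed, twinned and has no maximal elements. -/
structure GoodTree (Γ : Set Node) : Prop where
  lt_omega1 : ∀ σ ∈ Γ, σ.len < omega1
  downward : ∀ σ ∈ Γ, ∀ β ≤ σ.len, σ.restrict β ∈ Γ
  twinned : ∀ σ ∈ Γ, σ.dagger ∈ Γ
  noMax : ∀ σ ∈ Γ, ∃ τ ∈ Γ, σ.len < τ.len ∧ τ.Extends σ

/-- `X(Γ)`: the maximal branches of `Γ`, i.e. the minimal elements of `2^{≤ω₁} ∖ Γ`. -/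
def XGamma (Γ : Set Node) : Set Node :=
  { x | x.len ≤ omega1 ∧ x ∉ Γ ∧ ∀ β < x.len, x.restrict β ∈ Γ }

/-- The index domain of the branch sequence `A_{Γ,x}`. -/
def branchDomain (Γ : Set Node) (x : Node) : Set Ordinal :=
  { α | α + 1 ≤ x.len ∧ x.restrict (α + 1) ∈ Γ }

/-- The branch sequence `A_{Γ,x}`, `a^x_α = a_{x ↾ (α+1)}`. -/
def branchSeq (a : Node → Set ℕ) (x : Node) : Ordinal → Set ℕ :=
  fun α => a (x.restrict (α + 1))

/-- A `𝕋`-algebra on the tree `Γ`. -/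
structure IsTAlgebra (Γ : Set Node) (a : Node → Set ℕ) : Prop where
  tree : GoodTree Γ
  empty_of_not_succ : ∀ σ ∈ Γ, ¬ IsSucc σ.len → a σ = ∅
  compl_dagger : ∀ σ ∈ Γ, IsSucc σ.len → a σ.dagger = (a σ)ᶜ
  branch_coherent : ∀ x : Node, x.len ≤ omega1 →
    CoherentOn (branchDomain Γ x) (branchSeq a x)
  branch_proper : ∀ x : Node, x.len ≤ omega1 →
    ProperOn (branchDomain Γ x) (branchSeq a x)

/-- The Boolean subalgebra of `P(ℕ)` generated by a family `G`. -/
inductive GenBool (G : Set (Set ℕ)) : Set ℕ → Prop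
  | basic (s : Set ℕ) : s ∈ G → GenBool G s
  | empty : GenBool G ∅
  | compl (s : Set ℕ) : GenBool G s → GenBool G sᶜ
  | inter (s t : Set ℕ) : GenBool G s → GenBool G t → GenBool G (s ∩ t)

/-- `B_Γ`: the Boolean subalgebra of `P(ℕ)` generated by `{a_σ : σ ∈ Γ}`. -/
def BGamma (Γ : Set Node) (a : Node → Set ℕ) : Set (Set ℕ) :=
  { b | GenBool { s | ∃ σ ∈ Γ, s = a σ } b }

/-- A finite intersection from the family `{ℕ ∖ a_{x↾(α+1)} : α + 1 ≤ λ_x}`. -/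
def finInterCompl (a : Node → Set ℕ) (x : Node) (F : Finset Ordinal) : Set ℕ :=
  ⋂ α ∈ F, (a (x.restrict (α + 1)))ᶜ

/-- The ultrafilter `U_x` on `B_Γ` generated by the finite intersections of
`{ℕ ∖ a_{x↾(α+1)} : α + 1 ≤ λ_x}`. -/
def Ux (Γ : Set Node) (a : Node → Set ℕ) (x : Node) : Set (Set ℕ) :=
  { b | b ∈ BGamma Γ a ∧
    ∃ F : Finset Ordinal, (∀ α ∈ F, α + 1 ≤ x.len) ∧ finInterCompl a x F ⊆ b }

/-- The Stone topology on `X(Γ)`, with subbasic open sets `{z : b ∈ U_z}`, `b ∈ B_Γ`. -/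
def stoneTop (Γ : Set Node) (a : Node → Set ℕ) :
    TopologicalSpace {z : Node // z ∈ XGamma Γ} :=
  TopologicalSpace.generateFrom
    { s | ∃ b ∈ BGamma Γ a, s = { z : {z : Node // z ∈ XGamma Γ} | b ∈ Ux Γ a z.1 } }

/-- An ultrafilter on a Boolean subalgebra `B` of `P(ℕ)`. -/
def IsUltrafilterOn (B U : Set (Set ℕ)) : Prop :=
  U ⊆ B ∧
  (∀ s ∈ U, ∀ t ∈ U, s ∩ t ∈ U) ∧
  (∀ s ∈ U, ∀ t ∈ B, s ⊆ t → t ∈ U) ∧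
  ∅ ∉ U ∧
  (∀ b ∈ B, Xor' (b ∈ U) (bᶜ ∈ U))

/-- The length-lexicographic (strict) order on finite binary strings. -/
def LenLexLT (σ τ : Node) : Prop :=
  σ.len < τ.len ∨ (σ.len = τ.len ∧ ∃ i < σ.len, σ.val i = false ∧ τ.val i = true ∧
    ∀ j < i, σ.val j = τ.val j)

/-- `e` is the standard length-lexicographic enumeration of `2^{<ω}`. -/
def IsStdEnum (e : ℕ → Node) : Prop :=
  (∀ k, (e k).len < Ordinal.omega0) ∧
  (∀ σ : Node, σ.len < Ordinal.omega0 → ∃ k, e k = σ) ∧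
  (∀ k l : ℕ, k < l → LenLexLT (e k) (e l))

/-- `⋃_{k<n} c^x_k` where `c^x_n = a^x_{e(n)} ∖ ⋃_{k<n} c^x_k` (recursively). -/
def cUnion (a : Node → Set ℕ) (x : Node) (eb : ℕ → Ordinal) : ℕ → Set ℕ
  | 0 => ∅
  | n + 1 => cUnion a x eb n ∪ (a (x.restrict (eb n + 1)) \ cUnion a x eb n)

/-- `c^x_n = a^x_{e(n)} ∖ ⋃_{k<n} c^x_k`. -/
def cSeq (a : Node → Set ℕ) (x : Node) (eb : ℕ → Ordinal) (n : ℕ) : Set ℕ :=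
  a (x.restrict (eb n + 1)) \ cUnion a x eb n

/-- `{x ⌢ σ : σ ∈ 2^{<ω}}`. -/
def appendSet (x : Node) : Set Node :=
  { τ | ∃ σ : Node, σ.len < Ordinal.omega0 ∧ τ = x.append σ }

/-- The defining equations of the extension `A_Γ[π,x]`:
`a_x = ∅`, `a_{x⌢(σ⌢0)} = ⋃{c^x_k : σ⌢1 ⊆ σ_{π(k)}}`, `a_{x⌢(σ⌢1)} = ℕ ∖ a_{x⌢(σ⌢0)}`. -/
def ExtEquations (e : ℕ → Node) (π : ℕ → ℕ) (a : Node → Set ℕ) (x : Node)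
    (eb : ℕ → Ordinal) (a' : Node → Set ℕ) : Prop :=
  a' x = ∅ ∧
  ∀ σ : Node, σ.len < Ordinal.omega0 →
    (a' (x.append (σ.snoc false)) =
      ⋃ k ∈ { k : ℕ | (e (π k)).Extends (σ.snoc true) }, cSeq a x eb k) ∧
    (a' (x.append (σ.snoc true)) = (a' (x.append (σ.snoc false)))ᶜ)

/-- The full tree `2^{<ω₁}`. -/
def GammaFull : Set Node := { σ | σ.len < omega1 }

theorem natLtOmega1 (n : ℕ) : (n : Ordinal) < omega1 := by
  have h1 : (n : Ordinal) < Ordinal.omega0 := Ordinal.nat_lt_omega0 n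
  have h2 : Ordinal.omega0 < omega1 := by
    rw [omega1, ← Cardinal.ord_aleph0]
    exact Cardinal.ord_lt_ord.2 (by rw [← Cardinal.aleph_zero]
                                    exact Cardinal.aleph_lt_aleph.2 zero_lt_one)
  exact h1.trans h2

/-!
For each `ξ < ω₁` pick `γ_ξ ∈ S` and a finite `W_ξ ⊆ ξ` witnessing `ξ ∈ â_{γ_ξ}`. By Fodor's
lemma `W_ξ` is a fixed `V` on a stationary set `R`, and a diagonal intersection shrinks `R` to a
stationary `R'` such that for every `α` either `α ∈ â_ξ` for stationarily many `ξ ∈ R`, or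
`α ∉ â_ξ` for all `ξ ∈ R'` above `α`. Split `R'` into disjoint stationary sets `T₁, T₂` and let
`F = V ∪ F₁ ∪ F₂`, where `Tᵢ ∪ Fᵢ` is a cover by the ScP. Let `α ∉ â_F`. In the first case,
coherence and properness force `α ∈ â_γ` for unboundedly many `γ ∈ S`. In the second, `α` can
only be covered by `Tᵢ ∪ Fᵢ` as an element of `Tᵢ`, so `α ∈ T₁ ∩ T₂ = ∅`.
-/

theorem omega1_eq_omega_one : omega1 = Ordinal.omega 1 :=
  Cardinal.ord_aleph 1

theorem isSuccLimit_omega1 : Order.IsSuccLimit omega1 :=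
  omega1_eq_omega_one ▸ Cardinal.isSuccLimit_omega 1

theorem omega1_pos : 0 < omega1 :=
  isSuccLimit_omega1.pos

theorem add_one_lt_omega1 {x : Ordinal} (hx : x < omega1) : x + 1 < omega1 := by
  rw [← Order.succ_eq_add_one]
  exact isSuccLimit_omega1.succ_lt hx

theorem iSup_lt_omega1 {ι : Type*} [Countable ι] {f : ι → Ordinal} (hf : ∀ i, f i < omega1) :
    ⨆ i, f i < omega1 := by
  rw [omega1_eq_omega_one] at hf ⊢
  exact Ordinal.iSup_lt_omega_one hf

theorem countable_Iio_of_lt_omega1 {x : Ordinal} (hx : x < omega1) : (Iio x).Countable := by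
  have hcard : x.card ≤ Cardinal.aleph0 := by
    rw [← Order.lt_succ_iff, Cardinal.succ_aleph0, ← Cardinal.lt_ord]
    exact hx
  rw [← Cardinal.le_aleph0_iff_set_countable, Cardinal.mk_Iio_ordinal]
  simpa using Cardinal.lift_le.mpr hcard

theorem exists_lt_omega1_forall_lt_of_countable {A : Set Ordinal} (hA : A ⊆ Iio omega1)
    (hc : A.Countable) : ∃ b < omega1, ∀ x ∈ A, x < b := by
  have := hc.to_subtype
  refine ⟨(⨆ x : A, x.1) + 1, add_one_lt_omega1 (iSup_lt_omega1 fun x => hA x.2),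
    fun x hx => Order.lt_add_one_iff.2 (le_ciSup (f := fun y : A => y.1) ?_ ⟨x, hx⟩)⟩
  exact Ordinal.bddAbove_of_small

theorem exists_strictMono_chain (Q : ℕ → Ordinal → Ordinal → Prop) {x₀ : Ordinal}
    (hx₀ : x₀ < omega1) (hstep : ∀ n x, x < omega1 → ∃ y, x < y ∧ y < omega1 ∧ Q n x y) :
    ∃ g : ℕ → Ordinal, g 0 = x₀ ∧ StrictMono g ∧ (∀ n, Q n (g n) (g (n + 1))) ∧
      ⨆ n, g n < omega1 := by
  choose! next hgt hlt hQ using hstep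
  let g : ℕ → Ordinal := fun n => Nat.rec x₀ next n
  have hg : ∀ n, g n < omega1 := by
    intro n
    induction n with
    | zero => exact hx₀
    | succ n ih => exact hlt n _ ih
  exact ⟨g, rfl, strictMono_nat_of_lt_succ fun n => hgt n _ (hg n), fun n => hQ n _ (hg n),
    iSup_lt_omega1 hg⟩

namespace IsClubOmega1

variable {C : Set Ordinal}

theorem exists_gt (hC : IsClubOmega1 C) {x : Ordinal} (hx : x < omega1) : ∃ y ∈ C, x < y := by
  obtain ⟨y, hy, hxy⟩ := hC.2.1 (x + 1) (add_one_lt_omega1 hx)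
  exact ⟨y, hy, Order.add_one_le_iff.1 hxy⟩

theorem nonempty (hC : IsClubOmega1 C) : C.Nonempty :=
  let ⟨y, hy, _⟩ := hC.exists_gt omega1_pos
  ⟨y, hy⟩

theorem iSup_mem (hC : IsClubOmega1 C) {g : ℕ → Ordinal} (hg : StrictMono g)
    (hlt : ⨆ n, g n < omega1) (hfreq : ∀ n, ∃ k, n ≤ k ∧ g k ∈ C) : ⨆ n, g n ∈ C := by
  have hbdd : BddAbove (range g) := Ordinal.bddAbove_of_small
  have hbelow : ∀ n, g n < ⨆ n, g n :=
    fun n => (hg n.lt_succ_self).trans_le (le_ciSup hbdd _)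
  refine hC.2.2 _ hlt (hbelow 0).ne_bot fun α hα => ?_
  obtain ⟨n, hn⟩ := (lt_ciSup_iff hbdd).1 hα
  obtain ⟨k, hnk, hk⟩ := hfreq n
  exact ⟨g k, hk, hn.trans_le (hg.monotone hnk), hbelow k⟩

end IsClubOmega1

theorem isClub_Iio : IsClubOmega1 (Iio omega1) :=
  ⟨subset_rfl, fun α hα => ⟨α, hα, le_rfl⟩, fun _ hδ _ _ => hδ⟩

theorem isClub_Ioo {b : Ordinal} (hb : b < omega1) : IsClubOmega1 (Ioo b omega1) := by
  refine ⟨fun x hx => hx.2, fun α hα => ?_, fun δ hδ hδ0 happ => ?_⟩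
  · exact ⟨max α (b + 1), ⟨Order.lt_add_one_iff.2 le_rfl |>.trans_le (le_max_right _ _),
      max_lt hα (add_one_lt_omega1 hb)⟩, le_max_left _ _⟩
  · obtain ⟨β, hβ, -, hβδ⟩ := happ 0 (pos_iff_ne_zero.2 hδ0)
    exact ⟨hβ.1.trans hβδ, hδ⟩

theorem isClub_iInter {ι : Type*} [Countable ι] [Nonempty ι] {C : ι → Set Ordinal}
    (hC : ∀ i, IsClubOmega1 (C i)) : IsClubOmega1 (⋂ i, C i) := by
  obtain ⟨e, he⟩ := exists_surjective_nat ι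
  refine ⟨(iInter_subset _ (Classical.arbitrary ι)).trans (hC _).1, fun α hα => ?_,
    fun δ hδ hδ0 happ => mem_iInter.2 fun i => (hC i).2.2 δ hδ hδ0 fun β hβ => ?_⟩
  · -- each `C i` is visited at the infinitely many steps `Nat.pair m n` with `e m = i`
    obtain ⟨g, rfl, hg, hQ, hlt⟩ := exists_strictMono_chain (fun n _ y => y ∈ C (e n.unpair.1))
      hα fun n x hx =>
        let ⟨y, hy, hxy⟩ := (hC _).exists_gt hx
        ⟨y, hxy, (hC _).1 hy, hy⟩
    refine ⟨⨆ n, g n, mem_iInter.2 fun i => (hC i).iSup_mem hg hlt fun n => ?_,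
      le_ciSup Ordinal.bddAbove_of_small 0⟩
    obtain ⟨m, rfl⟩ := he i
    refine ⟨Nat.pair m n + 1, (Nat.right_le_pair m n).trans (Nat.le_succ _), ?_⟩
    simpa using hQ (Nat.pair m n)
  · obtain ⟨γ, hγ, hβγ, hγδ⟩ := happ β hβ
    exact ⟨γ, mem_iInter.1 hγ i, hβγ, hγδ⟩

theorem IsClubOmega1.inter {C D : Set Ordinal} (hC : IsClubOmega1 C) (hD : IsClubOmega1 D) :
    IsClubOmega1 (C ∩ D) := by
  rw [inter_eq_iInter]
  exact isClub_iInter (Bool.forall_bool.2 ⟨hD, hC⟩)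

def diagInter (C : Ordinal → Set Ordinal) : Set Ordinal :=
  {x | x < omega1 ∧ ∀ γ < x, x ∈ C γ}

theorem isClub_diagInter {C : Ordinal → Set Ordinal} (hC : ∀ γ, IsClubOmega1 (C γ)) :
    IsClubOmega1 (diagInter C) := by
  refine ⟨fun x hx => hx.1, fun α hα => ?_, fun δ hδ hδ0 happ => ⟨hδ, fun γ hγ => ?_⟩⟩
  · obtain ⟨g, rfl, hg, hQ, hlt⟩ := exists_strictMono_chain (fun _ x y => ∀ γ ≤ x, y ∈ C γ)
      hα fun _ x hx => by
        have := (countable_Iio_of_lt_omega1 (add_one_lt_omega1 hx)).to_subtype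
        have : Nonempty (Iio (x + 1)) := ⟨⟨x, Order.lt_add_one_iff.2 (le_refl x)⟩⟩
        have hI := isClub_iInter fun γ : Iio (x + 1) => hC γ
        obtain ⟨y, hy, hxy⟩ := hI.exists_gt hx
        exact ⟨y, hxy, hI.1 hy, fun γ hγ => mem_iInter.1 hy ⟨γ, Order.lt_add_one_iff.2 hγ⟩⟩
    refine ⟨⨆ n, g n, ⟨hlt, fun γ hγ => ?_⟩, le_ciSup Ordinal.bddAbove_of_small 0⟩
    obtain ⟨n, hn⟩ := (lt_ciSup_iff Ordinal.bddAbove_of_small).1 hγ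
    refine (hC γ).iSup_mem hg hlt fun m =>
      ⟨max m n + 1, (le_max_left m n).trans (Nat.le_succ _), ?_⟩
    exact hQ _ γ (hn.le.trans (hg.monotone (le_max_right m n)))
  · refine (hC γ).2.2 δ hδ hδ0 fun α hα => ?_
    obtain ⟨β, hβ, hβα, hβδ⟩ := happ (max α γ) (max_lt hα hγ)
    exact ⟨β, hβ.2 γ ((le_max_right α γ).trans_lt hβα), (le_max_left α γ).trans_lt hβα, hβδ⟩

theorem isStationary_Iio : IsStationaryOmega1 (Iio omega1) := fun _ hC =>
  let ⟨x, hx⟩ := hC.nonempty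
  ⟨x, hC.1 hx, hx⟩

theorem not_isStationaryOmega1_iff {S : Set Ordinal} :
    ¬ IsStationaryOmega1 S ↔ ∃ C, IsClubOmega1 C ∧ Disjoint S C := by
  simp only [IsStationaryOmega1, not_forall, not_nonempty_iff_eq_empty, exists_prop,
    disjoint_iff_inter_eq_empty]

namespace IsStationaryOmega1

variable {S : Set Ordinal}

theorem nonempty (hS : IsStationaryOmega1 S) : S.Nonempty :=
  let ⟨x, hx, _⟩ := hS _ isClub_Iio
  ⟨x, hx⟩

theorem mono (hS : IsStationaryOmega1 S) {T : Set Ordinal} (h : S ⊆ T) : IsStationaryOmega1 T :=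
  fun C hC => (hS C hC).mono (inter_subset_inter_left C h)

theorem inter_isClub (hS : IsStationaryOmega1 S) {C : Set Ordinal} (hC : IsClubOmega1 C) :
    IsStationaryOmega1 (S ∩ C) := fun _ hD =>
  let ⟨x, hxS, hxC, hxD⟩ := hS _ (hC.inter hD)
  ⟨x, ⟨hxS, hxC⟩, hxD⟩

/-- Fodor's lemma. -/
theorem exists_isStationary_fiber_of_regressive (hS : IsStationaryOmega1 S)
    {f : Ordinal → Ordinal} (hf : ∀ x ∈ S, f x < x) :
    ∃ c, IsStationaryOmega1 {x ∈ S | f x = c} := by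
  by_contra! h
  choose C hC hdisj using fun c => not_isStationaryOmega1_iff.1 (h c)
  obtain ⟨x, hxS, hxD⟩ := hS _ (isClub_diagInter hC)
  exact disjoint_left.1 (hdisj (f x)) ⟨hxS, rfl⟩ (hxD.2 _ (hf x hxS))

theorem exists_isStationary_fiber {β : Type*} {B : Set β} (hS : IsStationaryOmega1 S)
    (hB : B.Countable) {f : Ordinal → β} (hf : ∀ x ∈ S, f x ∈ B) :
    ∃ v ∈ B, IsStationaryOmega1 {x ∈ S | f x = v} := by
  by_contra! h
  choose C hC hdisj using fun v : B => not_isStationaryOmega1_iff.1 (h v v.2)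
  have := hB.to_subtype
  have : Nonempty B := let ⟨x, hx⟩ := hS.nonempty; ⟨⟨f x, hf x hx⟩⟩
  obtain ⟨x, hxS, hxC⟩ := hS _ (isClub_iInter hC)
  exact disjoint_left.1 (hdisj ⟨f x, hf x hxS⟩) ⟨hxS, rfl⟩ (mem_iInter.1 hxC _)

/-- `f x` is the `n`-th term of an enumeration `s x` of `Iio x`, for one suitable `n`. Were there
none, there would be bounds `b n` and clubs `C n` missing `{x | b n ≤ s x n}`; but a point
`x ∈ S ∩ ⋂ C n` above a strict bound `bs` of all `b n` has `bs = s x n` for some `n`. -/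
theorem exists_regressive_forall_isStationary (hS : IsStationaryOmega1 S)
    (hS₀ : S ⊆ Ioo 0 omega1) : ∃ f : Ordinal → Ordinal, (∀ x ∈ S, f x < x) ∧
      ∀ b < omega1, IsStationaryOmega1 {x ∈ S | b ≤ f x} := by
  choose! s hs using fun x (hx : x ∈ S) =>
    (countable_Iio_of_lt_omega1 (hS₀ hx).2).exists_eq_range ⟨0, (hS₀ hx).1⟩
  have hslt : ∀ x ∈ S, ∀ n, s x n < x := fun x hx n =>
    show s x n ∈ Iio x from hs x hx ▸ mem_range_self n
  suffices ∃ n, ∀ b < omega1, IsStationaryOmega1 {x ∈ S | b ≤ s x n} by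
    obtain ⟨n, hn⟩ := this
    exact ⟨fun x => s x n, fun x hx => hslt x hx n, hn⟩
  by_contra! h
  have h' : ∀ n, ∃ b < omega1, ∃ C, IsClubOmega1 C ∧ Disjoint {x ∈ S | b ≤ s x n} C :=
    fun n => (h n).imp fun b hb => ⟨hb.1, not_isStationaryOmega1_iff.1 hb.2⟩
  choose b hb C hC hdisj using h'
  obtain ⟨bs, hbs, hbbs⟩ := exists_lt_omega1_forall_lt_of_countable
    (range_subset_iff.2 hb) (countable_range b)
  obtain ⟨x, hxS, hxC, hbsx, -⟩ := hS _ ((isClub_iInter hC).inter (isClub_Ioo hbs))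
  obtain ⟨n, hn⟩ := (hs x hxS ▸ hbsx : bs ∈ range (s x))
  exact disjoint_left.1 (hdisj n) ⟨hxS, hn ▸ (hbbs _ (mem_range_self n)).le⟩ (mem_iInter.1 hxC n)

theorem exists_disjoint_pair (hS : IsStationaryOmega1 S) : ∃ S₁ ⊆ S, ∃ S₂ ⊆ S,
    IsStationaryOmega1 S₁ ∧ IsStationaryOmega1 S₂ ∧ Disjoint S₁ S₂ := by
  have hS' := hS.inter_isClub (isClub_Ioo omega1_pos)
  obtain ⟨f, hf, hunb⟩ := hS'.exists_regressive_forall_isStationary inter_subset_right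
  obtain ⟨c, hc⟩ := hS'.exists_isStationary_fiber_of_regressive hf
  have hcω : c < omega1 :=
    let ⟨x, hx, hfx⟩ := hc.nonempty
    hfx ▸ (hf x hx).trans hx.2.2
  refine ⟨_, fun x hx => hx.1.1, _, fun x hx => hx.1.1, hc, hunb (c + 1) (add_one_lt_omega1 hcω),
    disjoint_left.2 fun x hx₁ hx₂ => ?_⟩
  exact (Order.lt_add_one_iff.2 (le_refl c)).not_ge (hx₁.2 ▸ hx₂.2)

theorem exists_subset_forall_lt_not_mem (hS : IsStationaryOmega1 S) (T : Ordinal → Set Ordinal) :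
    ∃ S' ⊆ S, IsStationaryOmega1 S' ∧
      ∀ x ∈ S', ∀ α < x, ¬ IsStationaryOmega1 (T α) → x ∉ T α := by
  have hclub : ∀ α, ∃ C, IsClubOmega1 C ∧ (¬ IsStationaryOmega1 (T α) → Disjoint (T α) C) := by
    intro α
    by_cases h : IsStationaryOmega1 (T α)
    · exact ⟨_, isClub_Iio, fun h' => absurd h h'⟩
    · obtain ⟨C, hC, hdisj⟩ := not_isStationaryOmega1_iff.1 h
      exact ⟨C, hC, fun _ => hdisj⟩
  choose C hC hdisj using hclub
  exact ⟨_, inter_subset_left, hS.inter_isClub (isClub_diagInter hC),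
    fun x hx α hαx hT hxT => disjoint_left.1 (hdisj α hT) hxT (hx.2.2 α hαx)⟩

theorem exists_isStationary_eq_finset (hS : IsStationaryOmega1 S) (W : Ordinal → Finset Ordinal)
    (hW : ∀ x ∈ S, ∀ ν ∈ W x, ν < x) :
    ∃ V : Finset Ordinal, ↑V ⊆ Iio omega1 ∧ IsStationaryOmega1 {x ∈ S | W x = V} := by
  have hS' := hS.inter_isClub (isClub_Ioo omega1_pos)
  obtain ⟨c, hc⟩ := hS'.exists_isStationary_fiber_of_regressive (f := fun x => (W x).sup id)
    fun x hx => (Finset.sup_lt_iff (Ordinal.bot_eq_zero ▸ hx.2.1)).2 (hW x hx.1)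
  have hcω : c < omega1 := by
    obtain ⟨x, hx, rfl⟩ := hc.nonempty
    exact ((Finset.sup_lt_iff (Ordinal.bot_eq_zero ▸ hx.2.1)).2 (hW x hx.1)).trans hx.2.2
  have hB : {V : Finset Ordinal | ↑V ⊆ Iic c}.Countable := by
    have hIic : (Iic c).Countable := (countable_Iio_of_lt_omega1 (add_one_lt_omega1 hcω)).mono
      fun x (hx : x ≤ c) => Order.lt_add_one_iff.2 hx
    refine ((countable_ofPred_finite_subset hIic).preimage Finset.coe_injective).mono ?_
    intro V hV
    exact ⟨V.finite_toSet, hV⟩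
  obtain ⟨V, hVc, hV⟩ := hc.exists_isStationary_fiber hB fun x hx ν hν =>
    hx.2 ▸ Finset.le_sup (f := id) hν
  exact ⟨V, fun ν hν => (hVc hν).trans_lt hcω, hV.mono fun x hx => ⟨hx.1.1.1, hx.2⟩⟩

end IsStationaryOmega1

section CoherentSequence

variable {a : Ordinal → Set ℕ}

theorem self_mem_hatA (a : Ordinal → Set ℕ) (γ : Ordinal) : γ ∈ hatA a γ :=
  ⟨le_rfl, ∅, by simp, by simp⟩

theorem mem_unionFin {F : Finset Ordinal} {x : ℕ} : x ∈ unionFin a F ↔ ∃ γ ∈ F, x ∈ a γ := by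
  simp [unionFin]

theorem CoherentOn.exists_inter_subset_unionFin {D : Set Ordinal} (hcoh : CoherentOn D a)
    {α η : Ordinal} (hη : η ∈ D) (hα : α ∉ hatA a η) :
    ∃ K : Finset Ordinal, (∀ γ ∈ K, γ < α) ∧ a α ∩ a η ⊆ unionFin a K := by
  rcases lt_or_ge η α with hηα | hαη
  · exact ⟨{η}, by simpa, fun x hx => mem_unionFin.2 ⟨η, Finset.mem_singleton_self η, hx.2⟩⟩
  · obtain ⟨K, hK, h | h⟩ := hcoh α η hαη hη
    · exact ⟨K, hK, h⟩
    · exact absurd ⟨hαη, K, hK, fun x hx => (h hx.1).resolve_left hx.2⟩ hα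

theorem ProperOn.not_subset_unionFin_union {D : Set Ordinal} (hprop : ProperOn D a)
    (hcoh : CoherentOn D a) {α : Ordinal} (hα : α ∈ D) {V E : Finset Ordinal} (hV : ↑V ⊆ D)
    (hVα : ∀ η ∈ V, α ∉ hatA a η) (hE : ∀ γ ∈ E, γ < α) :
    ¬ a α ⊆ unionFin a V ∪ unionFin a E := by
  intro hsub
  choose! K hK hKsub using fun η (hη : η ∈ V) =>
    hcoh.exists_inter_subset_unionFin (hV hη) (hVα η hη)
  refine hprop α hα (E ∪ V.biUnion K) ?_ fun x hx => ?_
  · simp only [Finset.mem_union, Finset.mem_biUnion]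
    rintro γ (hγ | ⟨η, hη, hγ⟩)
    exacts [hE γ hγ, hK η hη γ hγ]
  · simp only [mem_unionFin, Finset.mem_union, Finset.mem_biUnion]
    rcases hsub hx with h | h
    · obtain ⟨η, hη, hxη⟩ := mem_unionFin.1 h
      obtain ⟨γ, hγ, hxγ⟩ := mem_unionFin.1 (hKsub η hη ⟨hx, hxη⟩)
      exact ⟨γ, Or.inr ⟨η, hη, hγ⟩, hxγ⟩
    · obtain ⟨γ, hγ, hxγ⟩ := mem_unionFin.1 h
      exact ⟨γ, Or.inl hγ, hxγ⟩

/-- Take `ξ` above a bound of the countable set, so that `α ∉ â_γ` for the `γ` covering `ξ`;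
then `a_α ⊆ a_γ ∪ ⋃ V ∪ (a_α ∖ a_ξ)` contradicts properness. -/
theorem not_countable_setOf_mem_hatA (hcoh : CoherentOn (Iio omega1) a)
    (hprop : ProperOn (Iio omega1) a) {S : Set Ordinal} (hS : S ⊆ Iio omega1)
    {V : Finset Ordinal} (hV : ↑V ⊆ Iio omega1) {R : Set Ordinal}
    (hR : ∀ ξ ∈ R, ∃ γ ∈ S, ξ ≤ γ ∧ a ξ \ a γ ⊆ unionFin a V) {α : Ordinal}
    (hα : α < omega1) (hVα : ∀ η ∈ V, α ∉ hatA a η)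
    (hstat : IsStationaryOmega1 {ξ ∈ R | α ∈ hatA a ξ}) :
    ¬ {γ ∈ S | α ∈ hatA a γ}.Countable := by
  intro hcount
  obtain ⟨θ, hθ, hθbound⟩ :=
    exists_lt_omega1_forall_lt_of_countable ((sep_subset _ _).trans hS) hcount
  obtain ⟨ξ, ⟨hξR, -, E, hE, hEsub⟩, hθξ, -⟩ := hstat _ (isClub_Ioo hθ)
  obtain ⟨γ, hγS, hξγ, hγsub⟩ := hR ξ hξR
  have hγα : α ∉ hatA a γ := fun h => (hθbound γ ⟨hγS, h⟩).not_ge (hθξ.le.trans hξγ)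
  refine hprop.not_subset_unionFin_union hcoh hα (V := insert γ V) ?_ ?_ hE fun x hx => ?_
  · simpa [insert_subset_iff] using ⟨hS hγS, hV⟩
  · simpa [hγα] using hVα
  · by_cases hxξ : x ∈ a ξ
    · left
      by_cases hxγ : x ∈ a γ
      · exact mem_unionFin.2 ⟨γ, Finset.mem_insert_self γ V, hxγ⟩
      · obtain ⟨η, hη, hxη⟩ := mem_unionFin.1 (hγsub ⟨hxξ, hxγ⟩)
        exact mem_unionFin.2 ⟨η, Finset.mem_insert_of_mem hη, hxη⟩
    · exact Or.inr (hEsub ⟨hx, hxξ⟩)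

variable {T : Set Ordinal} {F : Finset Ordinal}

theorem coe_subset_Iio_of_biUnion_hatA_eq
    (hcov : ⋃ γ ∈ T ∪ (↑F : Set Ordinal), hatA a γ = Iio omega1) : ↑F ⊆ Iio omega1 :=
  fun γ hγ => hcov ▸ mem_biUnion (Or.inr hγ) (self_mem_hatA a γ)

theorem mem_of_biUnion_hatA_eq (hcov : ⋃ γ ∈ T ∪ (↑F : Set Ordinal), hatA a γ = Iio omega1)
    {α : Ordinal} (hα : α < omega1) (hF : ∀ γ ∈ F, α ∉ hatA a γ)
    (hT : ∀ ξ ∈ T, α < ξ → α ∉ hatA a ξ) : α ∈ T := by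
  obtain ⟨γ, hγ | hγ, hαγ⟩ :=
    mem_iUnion₂.1 (hcov ▸ hα : α ∈ ⋃ γ ∈ T ∪ (↑F : Set Ordinal), hatA a γ)
  · obtain rfl | hlt := hαγ.1.eq_or_lt
    · exact hγ
    · exact absurd hαγ (hT γ hγ hlt)
  · exact absurd hαγ (hF γ hγ)

end CoherentSequence

/-- For a proper coherent `ω₁`-sequence with the ScP: if `S ⊆ ω₁` is a cover, then
there is a finite `F ⊆ ω₁` such that for every `α ∈ ω₁ ∖ â_F` the set
`{γ ∈ S : α ∈ â_γ}` is uncountable. -/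
theorem stmt11 (a : Ordinal → Set ℕ)
    (hcoh : CoherentOn (Iio omega1) a) (hprop : ProperOn (Iio omega1) a)
    (hScP : HasScP (Iio omega1) a)
    (S : Set Ordinal) (hS : S ⊆ Iio omega1)
    (hcover : (⋃ γ ∈ S, hatA a γ) = Iio omega1) :
    ∃ F : Finset Ordinal, (↑F : Set Ordinal) ⊆ Iio omega1 ∧
      ∀ α < omega1, α ∉ (⋃ γ ∈ (↑F : Set Ordinal), hatA a γ) →
        ¬ ({ γ ∈ S | α ∈ hatA a γ }).Countable := by
  choose! g hgS hle W hW hWsub using fun ξ (hξ : ξ ∈ Iio omega1) =>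
    mem_iUnion₂.1 (hcover ▸ hξ : ξ ∈ ⋃ γ ∈ S, hatA a γ)
  obtain ⟨V, hV, hR⟩ := isStationary_Iio.exists_isStationary_eq_finset W hW
  set R := {ξ ∈ Iio omega1 | W ξ = V}
  have hRcov : ∀ ξ ∈ R, ∃ γ ∈ S, ξ ≤ γ ∧ a ξ \ a γ ⊆ unionFin a V :=
    fun ξ hξ => ⟨g ξ, hgS ξ hξ.1, hle ξ hξ.1, hξ.2 ▸ hWsub ξ hξ.1⟩
  obtain ⟨R', hR'R, hR', hR'avoid⟩ :=
    hR.exists_subset_forall_lt_not_mem fun α => {ξ ∈ R | α ∈ hatA a ξ}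
  obtain ⟨T₁, hT₁, T₂, hT₂, hT₁stat, hT₂stat, hdisj⟩ := hR'.exists_disjoint_pair
  obtain ⟨F₁, hF₁⟩ := hScP subset_rfl T₁ (fun ξ hξ => (hR'R (hT₁ hξ)).1) hT₁stat
  obtain ⟨F₂, hF₂⟩ := hScP subset_rfl T₂ (fun ξ hξ => (hR'R (hT₂ hξ)).1) hT₂stat
  refine ⟨V ∪ F₁ ∪ F₂, ?_, fun α hα hαF => ?_⟩
  · simpa only [Finset.coe_union, union_subset_iff] using
      ⟨⟨hV, coe_subset_Iio_of_biUnion_hatA_eq hF₁⟩, coe_subset_Iio_of_biUnion_hatA_eq hF₂⟩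
  have hαF' : ∀ γ ∈ V ∪ F₁ ∪ F₂, α ∉ hatA a γ := fun γ hγ h => hαF (mem_biUnion hγ h)
  by_cases hT : IsStationaryOmega1 {ξ ∈ R | α ∈ hatA a ξ}
  · exact not_countable_setOf_mem_hatA hcoh hprop hS hV hRcov hα
      (fun η hη => hαF' η (by simp [hη])) hT
  · have hTavoid : ∀ T ⊆ R', ∀ ξ ∈ T, α < ξ → α ∉ hatA a ξ :=
      fun T hT' ξ hξ hαξ h => hR'avoid ξ (hT' hξ) α hαξ hT ⟨hR'R (hT' hξ), h⟩
    have h₁ := mem_of_biUnion_hatA_eq hF₁ hα (fun γ hγ => hαF' γ (by simp [hγ]))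
      (hTavoid T₁ hT₁)
    have h₂ := mem_of_biUnion_hatA_eq hF₂ hα (fun γ hγ => hαF' γ (by simp [hγ]))
      (hTavoid T₂ hT₂)
    exact absurd h₂ (disjoint_left.1 hdisj h₁)

end
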